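/- Let q > 0 and, for 0 < a ≤ ρ, define λ(a, ρ) = ∫_1^{sinh(ρ)/sinh(a)} (v^{2q} − 1)^{−1/2} · sinh(a) · (1 + v² sinh(a)²)^{−1/2} dv. Then for every fixed ρ > 0, λ(a, ρ) → 0 as a → 0⁺. -/

import Mathlib

/-- The height at radius `ρ` of the profile curve of the r-catenoid with neck radius `a`. -/
noncomputable def catLam (q a ρ : ℝ) : ℝ :=
  ∫ v in (1 : ℝ)..(Real.sinh ρ / Real.sinh a),
    (v ^ (2 * q) - 1) ^ (-(1 : ℝ) / 2) * Real.sinh a *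
      (1 + v ^ 2 * Real.sinh a ^ 2) ^ (-(1 : ℝ) / 2)

/-!
Since `(1 + v² sinh² a)^(-1/2) ≤ 1`, it suffices to show that
`sinh a · ∫₁^T (v^(2q) - 1)^(-1/2) dv → 0` for `T = sinh ρ / sinh a`. With `p = min (2q) 1`,
Bernoulli's inequality gives `v^(2q) - 1 ≥ v^p - 1 ≥ p T^(p-1) (v - 1)` on `[1, T]`, so the
integral is at most `2 p^(-1/2) T^(1 - p/2)` and
`λ(a, ρ) ≤ 2 p^(-1/2) (sinh ρ)^(1 - p/2) (sinh a)^(p/2)`, which tends to `0` as `a → 0⁺`.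
-/

open Real Filter Topology MeasureTheory intervalIntegral

theorem mul_rpow_mul_sub_one_le_rpow_sub_one {p v T : ℝ} (hp0 : 0 ≤ p) (hp1 : p ≤ 1)
    (hv : 1 ≤ v) (hvT : v ≤ T) : p * T ^ (p - 1) * (v - 1) ≤ v ^ p - 1 := by
  have hv0 : 0 < v := by linarith
  have bernoulli : v ^ (1 - p) ≤ 1 + (1 - p) * (v - 1) := by
    simpa using rpow_one_add_le_one_add_mul_self (s := v - 1) (by linarith) (by linarith)
      (by linarith)
  have hmul : v ^ (1 - p) * v ^ (p - 1) = 1 := by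
    rw [← rpow_add hv0]; norm_num
  have hpow : v ^ p = v ^ (p - 1) * v := by
    rw [← rpow_add_one hv0.ne']; norm_num
  have hone := mul_le_mul_of_nonneg_right bernoulli (rpow_nonneg hv0.le (p - 1))
  rw [hmul] at hone
  have hTv : T ^ (p - 1) ≤ v ^ (p - 1) := rpow_le_rpow_of_nonpos hv0 hvT (by linarith)
  calc p * T ^ (p - 1) * (v - 1) ≤ p * v ^ (p - 1) * (v - 1) :=
        mul_le_mul_of_nonneg_right (mul_le_mul_of_nonneg_left hTv hp0) (by linarith)
    _ ≤ v ^ p - 1 := by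
        rw [hpow]
        linear_combination hone

theorem rpow_sub_one_rpow_neg_half_le {p r v T : ℝ} (hp0 : 0 < p) (hp1 : p ≤ 1) (hpr : p ≤ r)
    (hv : 1 < v) (hvT : v ≤ T) :
    (v ^ r - 1) ^ (-(1 : ℝ) / 2)
      ≤ p ^ (-(1 : ℝ) / 2) * T ^ ((1 - p) / 2) * (v - 1) ^ (-(1 : ℝ) / 2) := by
  have hT : 0 < T := by linarith
  have hpos : 0 < p * T ^ (p - 1) * (v - 1) := by
    have hTp : 0 < T ^ (p - 1) := rpow_pos_of_pos hT (p - 1)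
    have hv1 : 0 < v - 1 := by linarith
    positivity
  have hle : p * T ^ (p - 1) * (v - 1) ≤ v ^ r - 1 :=
    (mul_rpow_mul_sub_one_le_rpow_sub_one hp0.le hp1 hv.le hvT).trans
      (by linarith [rpow_le_rpow_of_exponent_le hv.le hpr])
  calc (v ^ r - 1) ^ (-(1 : ℝ) / 2) ≤ (p * T ^ (p - 1) * (v - 1)) ^ (-(1 : ℝ) / 2) :=
        rpow_le_rpow_of_nonpos hpos hle (by norm_num)
    _ = _ := by
        rw [mul_rpow (by positivity) (by linarith), mul_rpow hp0.le (rpow_nonneg hT.le _),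
          ← rpow_mul hT.le]
        ring_nf

theorem integral_sub_one_rpow_neg_half (X : ℝ) :
    ∫ v in (1 : ℝ)..X, (v - 1) ^ (-(1 : ℝ) / 2) = 2 * (X - 1) ^ ((1 : ℝ) / 2) := by
  rw [integral_comp_sub_right (fun x : ℝ => x ^ (-(1 : ℝ) / 2)), sub_self,
    integral_rpow (Or.inl (by norm_num))]
  norm_num
  ring

theorem intervalIntegrable_sub_one_rpow_neg_half (X : ℝ) :
    IntervalIntegrable (fun v : ℝ => (v - 1) ^ (-(1 : ℝ) / 2)) volume 1 X := by
  simpa using (intervalIntegrable_rpow' (a := 0) (b := X - 1) (r := -(1 : ℝ) / 2)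
    (by norm_num)).comp_sub_right 1

theorem norm_catLam_integrand_le {q p s v T : ℝ} (hp0 : 0 < p) (hp1 : p ≤ 1) (hpq : p ≤ 2 * q)
    (hs : 0 ≤ s) (hv : 1 < v) (hvT : v ≤ T) :
    ‖(v ^ (2 * q) - 1) ^ (-(1 : ℝ) / 2) * s * (1 + v ^ 2 * s ^ 2) ^ (-(1 : ℝ) / 2)‖
      ≤ s * p ^ (-(1 : ℝ) / 2) * T ^ ((1 - p) / 2) * (v - 1) ^ (-(1 : ℝ) / 2) := by
  have hbase : 0 ≤ v ^ (2 * q) - 1 := by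
    linarith [one_le_rpow hv.le (by linarith : 0 ≤ 2 * q)]
  have hfactor : (1 + v ^ 2 * s ^ 2) ^ (-(1 : ℝ) / 2) ≤ 1 :=
    rpow_le_one_of_one_le_of_nonpos (by nlinarith) (by norm_num)
  rw [norm_of_nonneg (by positivity)]
  calc _ ≤ (v ^ (2 * q) - 1) ^ (-(1 : ℝ) / 2) * s :=
        mul_le_of_le_one_right (by positivity) hfactor
    _ = s * (v ^ (2 * q) - 1) ^ (-(1 : ℝ) / 2) := mul_comm _ _
    _ ≤ s * (p ^ (-(1 : ℝ) / 2) * T ^ ((1 - p) / 2) * (v - 1) ^ (-(1 : ℝ) / 2)) :=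
        mul_le_mul_of_nonneg_left (rpow_sub_one_rpow_neg_half_le hp0 hp1 hpq hv hvT) hs
    _ = _ := by ring

theorem norm_catLam_le {q p a ρ : ℝ} (hp0 : 0 < p) (hp1 : p ≤ 1) (hpq : p ≤ 2 * q)
    (ha : 0 < a) (haρ : a ≤ ρ) :
    ‖catLam q a ρ‖
      ≤ 2 * p ^ (-(1 : ℝ) / 2) * sinh ρ ^ (1 - p / 2) * sinh a ^ (p / 2) := by
  set s := sinh a
  set T := sinh ρ / s
  have hs : 0 < s := sinh_pos_iff.2 ha
  have hT : 1 ≤ T := (one_le_div hs).2 (sinh_le_sinh.2 haρ)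
  set C := s * p ^ (-(1 : ℝ) / 2) * T ^ ((1 - p) / 2)
  calc ‖catLam q a ρ‖ ≤ ∫ v in (1 : ℝ)..T, C * (v - 1) ^ (-(1 : ℝ) / 2) :=
        norm_integral_le_of_norm_le hT
          (ae_of_all _ fun v hv => norm_catLam_integrand_le hp0 hp1 hpq hs.le hv.1 hv.2)
          ((intervalIntegrable_sub_one_rpow_neg_half T).const_mul C)
    _ = C * (2 * (T - 1) ^ ((1 : ℝ) / 2)) := by
        rw [intervalIntegral.integral_const_mul, integral_sub_one_rpow_neg_half T]
    _ ≤ C * (2 * T ^ ((1 : ℝ) / 2)) := by gcongr; linarith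
    _ = 2 * p ^ (-(1 : ℝ) / 2) * (s * (T ^ ((1 - p) / 2) * T ^ ((1 : ℝ) / 2))) := by ring
    _ = 2 * p ^ (-(1 : ℝ) / 2) * (s * T ^ (1 - p / 2)) := by
        rw [← rpow_add (by linarith)]
        ring_nf
    _ = _ := by
        have hquot : s / s ^ (1 - p / 2) = s ^ (p / 2) := by
          have := rpow_sub hs 1 (1 - p / 2)
          rwa [rpow_one, sub_sub_cancel, eq_comm] at this
        rw [div_rpow (sinh_nonneg_iff.2 (ha.le.trans haρ)) hs.le, ← hquot]
        ring

/-- For every fixed `ρ > 0`, `λ(a, ρ) → 0` as `a → 0⁺`. -/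
theorem stmt_16 (q ρ : ℝ) (hq : 0 < q) (hρ : 0 < ρ) :
    Filter.Tendsto (fun a => catLam q a ρ) (nhdsWithin 0 (Set.Ioi 0)) (nhds 0) := by
  set p := min (2 * q) 1
  have hp0 : 0 < p := lt_min (by linarith) one_pos
  have hbound : Tendsto
      (fun a => 2 * p ^ (-(1 : ℝ) / 2) * sinh ρ ^ (1 - p / 2) * sinh a ^ (p / 2))
      (𝓝[>] 0) (𝓝 0) := by
    have hcont : Continuous fun a => sinh a ^ (p / 2) :=
      continuous_sinh.rpow_const fun _ => Or.inr (by positivity)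
    have := (hcont.tendsto 0).const_mul (2 * p ^ (-(1 : ℝ) / 2) * sinh ρ ^ (1 - p / 2))
    rw [sinh_zero, zero_rpow (by positivity), mul_zero] at this
    exact this.mono_left nhdsWithin_le_nhds
  refine squeeze_zero_norm' ?_ hbound
  filter_upwards [Ioo_mem_nhdsGT hρ] with a ha
  exact norm_catLam_le hp0 (min_le_right _ _) (min_le_left _ _) ha.1 ha.2.le
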